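/- Let D be a domain, R = R(D), p a prime ideal of R, and α = ∑_{i=1}^n 1/f_i ∈ p with each f_i ∈ D nonzero, such that α cannot be written as a sum of fewer than n reciprocals of nonzero elements of D. Then 1/f_i ∈ p for all i. -/
import Mathlib


noncomputable def recip (D : Type*) [CommRing D] [IsDomain D] : Subring (FractionRing D) :=
  Subring.closure {x | ∃ d : D, d ≠ 0 ∧ x = (algebraMap D (FractionRing D) d)⁻¹}

/-- Let `p` be a prime ideal of `R(D)` and let
`α = ∑_{i=1}^n 1/fᵢ ∈ p` with all `fᵢ ∈ D` nonzero, such that `α` cannot be written as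
a sum of fewer than `n` reciprocals of nonzero elements of `D`.  Then `1/fᵢ ∈ p` for
every `i`. -/
theorem stmt_8 {D : Type*} [CommRing D] [IsDomain D]
    (p : Ideal (recip D)) (hp : p.IsPrime)
    (n : ℕ) (f : Fin n → D) (hf : ∀ i, f i ≠ 0)
    (α : recip D)
    (hα : (α : FractionRing D) = ∑ i, (algebraMap D (FractionRing D) (f i))⁻¹)
    (hmem : α ∈ p)
    (hmin : ∀ (m : ℕ) (g : Fin m → D), (∀ j, g j ≠ 0) →
      (α : FractionRing D) = ∑ j, (algebraMap D (FractionRing D) (g j))⁻¹ → n ≤ m) :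
    ∀ i, (⟨(algebraMap D (FractionRing D) (f i))⁻¹,
      Subring.subset_closure ⟨f i, hf i, rfl⟩⟩ : recip D) ∈ p := by
  induction n generalizing α with
  | zero => exact fun i => i.elim0
  | succ m ih =>
    set φ := algebraMap D (FractionRing D) with hφdef
    have hφi : Function.Injective φ := IsFractionRing.injective D (FractionRing D)
    have hfφ : ∀ i, φ (f i) ≠ 0 := fun i h => hf i (hφi (by simpa using h))
    -- α ≠ 0
    have hα0 : (α : FractionRing D) ≠ 0 := by
      intro h0
      have := hmin 0 (fun j => j.elim0) (fun j => j.elim0) (by simpa using h0)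
      omega
    -- the "common numerator"
    set c : D := ∑ i, ∏ j ∈ Finset.univ.erase i, f j with hcdef
    have hP : (∏ i, φ (f i)) ≠ 0 := Finset.prod_ne_zero_iff.2 fun i _ => hfφ i
    have hkey : φ c = (α : FractionRing D) * ∏ i, φ (f i) := by
      rw [hα, Finset.sum_mul, hcdef, map_sum]
      refine Finset.sum_congr rfl fun i _ => ?_
      rw [map_prod, ← Finset.mul_prod_erase _ _ (Finset.mem_univ i),
        inv_mul_cancel_left₀ (hfφ i)]
    have hc : c ≠ 0 := by
      intro h
      apply mul_ne_zero hα0 hP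
      rw [← hkey, h, map_zero]
    have hcinv : (φ c)⁻¹ ∈ recip D := Subring.subset_closure ⟨c, hc, rfl⟩
    have hprodmem : α * (⟨(φ c)⁻¹, hcinv⟩ : recip D) ∈ p :=
      Ideal.mul_mem_right _ _ hmem
    have hprodeq : α * (⟨(φ c)⁻¹, hcinv⟩ : recip D) =
        ∏ i, (⟨(φ (f i))⁻¹, Subring.subset_closure ⟨f i, hf i, rfl⟩⟩ : recip D) := by
      apply Subtype.ext
      push_cast [SubmonoidClass.coe_finset_prod]
      rw [hkey, mul_inv, ← mul_assoc, mul_inv_cancel₀ hα0, one_mul,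
        Finset.prod_inv_distrib]
    rw [hprodeq] at hprodmem
    obtain ⟨j, -, hj⟩ := (Ideal.IsPrime.prod_mem_iff).1 hprodmem
    intro i
    rcases eq_or_ne i j with rfl | hij
    · exact hj
    · obtain ⟨z, hz⟩ := Fin.exists_succAbove_eq hij
      subst hz
      set xj : recip D := ⟨(φ (f j))⁻¹, Subring.subset_closure ⟨f j, hf j, rfl⟩⟩
      set β : recip D := α - xj with hβdef
      have hβmem : β ∈ p := Ideal.sub_mem p hmem hj
      have hβ : (β : FractionRing D) = ∑ k, (φ (f (j.succAbove k)))⁻¹ := by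
        have := Fin.sum_univ_succAbove (fun i => (φ (f i))⁻¹) j
        rw [← hα] at this
        rw [hβdef]
        push_cast
        rw [this]
        ring
      have hβmin : ∀ (m' : ℕ) (g : Fin m' → D), (∀ k, g k ≠ 0) →
          (β : FractionRing D) = ∑ k, (φ (g k))⁻¹ → m ≤ m' := by
        intro m' g hg heq
        set g' : Fin (m' + 1) → D := Fin.cons (f j) g with hg'def
        have hg'ne : ∀ k : Fin (m' + 1), g' k ≠ 0 := by
          intro k
          refine Fin.cases ?_ ?_ k
          · simpa [hg'def] using hf j
          · intro k'; simpa [hg'def] using hg k'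
        have hsum : (α : FractionRing D) = ∑ k : Fin (m' + 1), (φ (g' k))⁻¹ := by
          rw [Fin.sum_univ_succ]
          simp only [hg'def, Fin.cons_zero, Fin.cons_succ]
          rw [← heq, hβdef]
          push_cast
          ring
        have := hmin (m' + 1) g' hg'ne hsum
        omega
      exact ih (fun k => f (j.succAbove k)) (fun k => hf _) β hβ hβmem hβmin z
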